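/- Let T ≥ 0, let X, Z be finite nonempty types and Y a finite additive abelian group, and let ε ∈ [0,1]. Let R : X → Y be drawn uniformly at random and, independently, let B ⊆ X be an ε-random subset. Define the blinded function B R : X → Y × ZMod 2 by (B R) x = (0, 1) if x ∈ B and (B R) x = (R x, 0) otherwise. Fix a quantum query algorithm with T queries: a unit vector ψ₀ in H = EuclideanSpace ℂ (X × (Y × ZMod 2) × Z) and unitaries C₀, …, C_T on H; the final state is ψ := C_T · O_{B R} · ⋯ · O_{B R} · C₀ · ψ₀, where O_{B R} is the oracle unitary for B R. Let out : X × (Y × ZMod 2) × Z → X × Y be any readout function. Then the probability that a computational-basis measurement of ψ yields an outcome w with out w = (m, t) satisfying m ∈ B and R m = t is at most 1/|Y|; that is, E_{R, B} [ Σ over basis labels w with out w = (m,t), m ∈ B, R m = t of |⟨e_w, ψ⟩|² ] ≤ 1/|Y|. -/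

import Mathlib

open scoped InnerProductSpace

noncomputable section

/-- The oracle unitary for a function `Q : X → Y'`: the permutation unitary induced on
standard basis vectors by `(x, y, z) ↦ (x, y + Q x, z)`. -/
def oracleOp {X Y' Z : Type*} [Fintype X] [Fintype Y'] [Fintype Z] [AddCommGroup Y']
    (Q : X → Y') :
    EuclideanSpace ℂ (X × Y' × Z) →L[ℂ] EuclideanSpace ℂ (X × Y' × Z) :=
  LinearMap.toContinuousLinearMap
    { toFun := fun ψ => (WithLp.toLp 2 (fun p : X × Y' × Z => ψ (p.1, p.2.1 - Q p.1, p.2.2)) : EuclideanSpace ℂ (X × Y' × Z))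
      map_add' := fun _ _ => rfl
      map_smul' := fun _ _ => rfl }

/-- `runQ T C O ψ₀ = C T • O • C (T-1) • ⋯ • O • C 0 • ψ₀`. -/
def runQ {H : Type*} [NormedAddCommGroup H] [NormedSpace ℂ H] :
    (T : ℕ) → (Fin (T + 1) → (H →L[ℂ] H)) → (H →L[ℂ] H) → H → H
  | 0, C, _, ψ => C 0 ψ
  | T + 1, C, O, ψ => C (Fin.last (T + 1)) (O (runQ T (fun i => C i.castSucc) O ψ))

/-!
On the blinded set `B` the oracle answers `⊥` whatever `R` is, so for fixed `B` the final state
depends on `R` only through its values off `B`. For a basis outcome `w` whose readout `m` lies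
in `B`, translating `R` by `Pi.single m c` is a bijection of `X → Y` that fixes the state and
moves `R m` through all of `Y`; hence the slice `R m = t` carries exactly `1/|Y|` of the total
weight of `w`. Summing over `w`, each state being a unit vector, bounds the forgery probability
by `1/|Y|` for every `B`, and averaging over the Bernoulli weights of `B` keeps the bound.
-/

theorem norm_oracleOp {X Y' Z : Type*} [Fintype X] [Fintype Y'] [Fintype Z] [AddCommGroup Y']
    (Q : X → Y') (ψ : EuclideanSpace ℂ (X × Y' × Z)) :
    ‖oracleOp Q ψ‖ = ‖ψ‖ := by
  let e := Equiv.prodShear (Equiv.refl X) fun x => (Equiv.addRight (Q x)).prodCongr (Equiv.refl Z)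
  have : oracleOp Q ψ = LinearIsometryEquiv.piLpCongrLeft 2 ℂ ℂ e ψ := by
    ext p
    simp [oracleOp, e, Equiv.piCongrLeft'_apply, sub_eq_add_neg, Prod.map]
  rw [this, LinearIsometryEquiv.norm_map]

theorem norm_runQ {H : Type*} [NormedAddCommGroup H] [InnerProductSpace ℂ H] [CompleteSpace H]
    (T : ℕ) {C : Fin (T + 1) → H →L[ℂ] H} (hC : ∀ i, C i ∈ unitary (H →L[ℂ] H))
    {O : H →L[ℂ] H} (hO : ∀ ψ, ‖O ψ‖ = ‖ψ‖) (ψ : H) :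
    ‖runQ T C O ψ‖ = ‖ψ‖ := by
  induction T with
  | zero => exact ContinuousLinearMap.norm_map_of_mem_unitary (hC 0) ψ
  | succ T ih =>
    rw [runQ, ContinuousLinearMap.norm_map_of_mem_unitary (hC _), hO, ih fun i => hC _]

section
variable {X Y : Type*} [Fintype X] [DecidableEq X] [Fintype Y] [DecidableEq Y] [AddCommGroup Y]

theorem sum_ite_apply_eq_of_add_single_invariant {g : (X → Y) → ℝ} {m : X}
    (hg : ∀ R c, g (R + Pi.single m c) = g R) (t : Y) :
    ∑ R : X → Y, (if R m = t then g R else 0) = (∑ R, g R) / Fintype.card Y := by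
  have hfiber : ∀ s, ∑ R : X → Y, (if R m = s then g R else 0)
      = ∑ R : X → Y, if R m = t then g R else 0 := fun s =>
    Fintype.sum_equiv (Equiv.addRight (Pi.single m (t - s))) _ _ fun R => by
      simp [hg, ← eq_sub_iff_add_eq, sub_sub_cancel]
  rw [eq_div_iff (by positivity), mul_comm]
  calc _ = ∑ s : Y, ∑ R : X → Y, (if R m = s then g R else 0) := by simp [hfiber]
    _ = ∑ R, g R := by rw [Finset.sum_comm]; simp

theorem sum_blind_forgery_le {ι : Type*} [Fintype ι] (χ : X → Bool) (out : ι → X × Y)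
    {ψ : (X → Y) → EuclideanSpace ℂ ι}
    (hψ : ∀ R R', (∀ x, χ x = false → R x = R' x) → ψ R = ψ R') (hnorm : ∀ R, ‖ψ R‖ = 1) :
    ∑ R : X → Y, ∑ w,
        (if χ (out w).1 = true ∧ R (out w).1 = (out w).2 then ‖ψ R w‖ ^ 2 else 0)
      ≤ Fintype.card (X → Y) / Fintype.card Y := by
  have hw : ∀ w, ∑ R : X → Y,
      (if χ (out w).1 = true ∧ R (out w).1 = (out w).2 then ‖ψ R w‖ ^ 2 else 0)
        ≤ (∑ R : X → Y, ‖ψ R w‖ ^ 2) / Fintype.card Y := by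
    intro w
    by_cases hm : χ (out w).1 = true
    · have hshift : ∀ R c, ‖ψ (R + Pi.single (out w).1 c) w‖ ^ 2 = ‖ψ R w‖ ^ 2 := by
        intro R c
        rw [hψ _ R]
        intro x hx
        have hxm : x ≠ (out w).1 := by rintro rfl; simp [hm] at hx
        simp [hxm]
      simp only [hm, true_and]
      exact (sum_ite_apply_eq_of_add_single_invariant hshift _).le
    · rw [Bool.not_eq_true] at hm
      simp only [hm, Bool.false_eq_true, false_and, if_false, Finset.sum_const_zero]
      positivity
  calc _ = ∑ w, ∑ R : X → Y,
        (if χ (out w).1 = true ∧ R (out w).1 = (out w).2 then ‖ψ R w‖ ^ 2 else 0) :=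
        Finset.sum_comm
    _ ≤ ∑ w, (∑ R : X → Y, ‖ψ R w‖ ^ 2) / Fintype.card Y := Finset.sum_le_sum fun w _ => hw w
    _ = Fintype.card (X → Y) / Fintype.card Y := by
        simp [← Finset.sum_div, Finset.sum_comm (γ := ι), ← EuclideanSpace.norm_sq_eq, hnorm]

end

theorem sum_prod_bernoulli_eq_one {X : Type*} [Fintype X] [DecidableEq X] (ε : ℝ) :
    ∑ χ : X → Bool, ∏ x, (if χ x then ε else 1 - ε) = 1 := by
  rw [← Fintype.prod_sum fun _ (b : Bool) => if b then ε else 1 - ε]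
  simp

theorem random_function_BU_secure_general
    {X Y Z : Type*} [Fintype X] [DecidableEq X]
    [Fintype Z] [DecidableEq Z]
    [Fintype Y] [DecidableEq Y] [AddCommGroup Y]
    (T : ℕ)
    (ψ₀ : EuclideanSpace ℂ (X × (Y × ZMod 2) × Z)) (hψ₀ : ‖ψ₀‖ = 1)
    (C : Fin (T + 1) →
      (EuclideanSpace ℂ (X × (Y × ZMod 2) × Z) →L[ℂ]
        EuclideanSpace ℂ (X × (Y × ZMod 2) × Z)))
    (hC : ∀ i, C i ∈
      unitary (EuclideanSpace ℂ (X × (Y × ZMod 2) × Z) →L[ℂ]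
        EuclideanSpace ℂ (X × (Y × ZMod 2) × Z)))
    (ε : ℝ) (hε0 : 0 ≤ ε) (hε1 : ε ≤ 1)
    (out : X × (Y × ZMod 2) × Z → X × Y) :
    (∑ R : X → Y, ∑ χ : X → Bool,
        (∏ x : X, (if χ x then ε else 1 - ε)) *
          ∑ w : X × (Y × ZMod 2) × Z,
            (if χ (out w).1 = true ∧ R (out w).1 = (out w).2
             then ‖(⟪EuclideanSpace.single w 1,
                runQ T C
                  (oracleOp fun x => if χ x then ((0 : Y), (1 : ZMod 2)) else (R x, 0)) ψ₀⟫_ℂ)‖ ^ 2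
             else 0))
      / (Fintype.card (X → Y) : ℝ)
      ≤ 1 / (Fintype.card Y : ℝ) := by
  let ψ : (X → Bool) → (X → Y) → EuclideanSpace ℂ (X × (Y × ZMod 2) × Z) := fun χ R =>
    runQ T C (oracleOp fun x => if χ x then ((0 : Y), (1 : ZMod 2)) else (R x, 0)) ψ₀
  have hblind : ∀ χ R R', (∀ x, χ x = false → R x = R' x) → ψ χ R = ψ χ R' := by
    intro χ R R' h
    simp only [ψ]
    congr 2
    ext x : 1
    cases hx : χ x <;> simp [hx, h x]
  have hforge : ∀ χ, ∑ R : X → Y, ∑ w,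
      (if χ (out w).1 = true ∧ R (out w).1 = (out w).2 then ‖ψ χ R w‖ ^ 2 else 0)
        ≤ Fintype.card (X → Y) / Fintype.card Y := fun χ =>
    sum_blind_forgery_le χ out (hblind χ) fun R => by
      rw [norm_runQ T hC (norm_oracleOp _), hψ₀]
  have hweight : ∀ χ : X → Bool, 0 ≤ ∏ x, (if χ x then ε else 1 - ε) := fun χ =>
    Finset.prod_nonneg fun x _ => by split_ifs <;> linarith
  simp only [EuclideanSpace.inner_single_left, map_one, one_mul]
  rw [Finset.sum_comm, div_le_iff₀ (by positivity), one_div_mul_eq_div]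
  calc _ = ∑ χ : X → Bool, (∏ x, (if χ x then ε else 1 - ε)) * ∑ R : X → Y, ∑ w,
        (if χ (out w).1 = true ∧ R (out w).1 = (out w).2 then ‖ψ χ R w‖ ^ 2 else 0) := by
        simp only [Finset.mul_sum, ψ]
    _ ≤ ∑ χ : X → Bool, (∏ x, (if χ x then ε else 1 - ε)) *
          (Fintype.card (X → Y) / Fintype.card Y) :=
        Finset.sum_le_sum fun χ _ => mul_le_mul_of_nonneg_left (hforge χ) (hweight χ)
    _ = Fintype.card (X → Y) / Fintype.card Y := by
        rw [← Finset.sum_mul, sum_prod_bernoulli_eq_one, one_mul]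

/-- A uniformly random function is a blind-unforgeable MAC: with `R : X → Y` uniformly
random and `B` an independent `ε`-random subset of `X`, no `T`-query algorithm with oracle
access to the blinded function `B R` (which outputs the blinding symbol `⊥ = (0,1)` on `B`
and `(R x, 0)` elsewhere) produces, upon computational-basis measurement and readout `out`,
a pair `(m, t)` with `m ∈ B` and `R m = t` with probability exceeding `1/|Y|`. -/
theorem random_function_BU_secure
    {X Y Z : Type*} [Fintype X] [DecidableEq X] [Nonempty X]
    [Fintype Z] [DecidableEq Z] [Nonempty Z]
    [Fintype Y] [DecidableEq Y] [AddCommGroup Y]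
    (T : ℕ)
    (ψ₀ : EuclideanSpace ℂ (X × (Y × ZMod 2) × Z)) (hψ₀ : ‖ψ₀‖ = 1)
    (C : Fin (T + 1) →
      (EuclideanSpace ℂ (X × (Y × ZMod 2) × Z) →L[ℂ]
        EuclideanSpace ℂ (X × (Y × ZMod 2) × Z)))
    (hC : ∀ i, C i ∈
      unitary (EuclideanSpace ℂ (X × (Y × ZMod 2) × Z) →L[ℂ]
        EuclideanSpace ℂ (X × (Y × ZMod 2) × Z)))
    (ε : ℝ) (hε0 : 0 ≤ ε) (hε1 : ε ≤ 1)
    (out : X × (Y × ZMod 2) × Z → X × Y) :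
    (∑ R : X → Y, ∑ χ : X → Bool,
        (∏ x : X, (if χ x then ε else 1 - ε)) *
          ∑ w : X × (Y × ZMod 2) × Z,
            (if χ (out w).1 = true ∧ R (out w).1 = (out w).2
             then ‖(⟪EuclideanSpace.single w 1,
                runQ T C
                  (oracleOp fun x => if χ x then ((0 : Y), (1 : ZMod 2)) else (R x, 0)) ψ₀⟫_ℂ)‖ ^ 2
             else 0))
      / (Fintype.card (X → Y) : ℝ)
      ≤ 1 / (Fintype.card Y : ℝ) :=
  random_function_BU_secure_general T ψ₀ hψ₀ C hC ε hε0 hε1 out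

end
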